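/- arXiv:2312.14298 — 2 statements merged into one kernel-verified Lean document; each statement's English description precedes it below -/
import Mathlib

section
/- For any connected graph G with at least two vertices, the corona G ∘ K_1 is not well-forced. -/
namespace ZF

variable {V : Type*}

/-- The set of vertices forced blue starting from `S`, under the standard color change
rule: a blue vertex with exactly one white neighbor forces that neighbor blue. -/
inductive Forced (G : SimpleGraph V) (S : Set V) : V → Prop
  | init {v : V} : v ∈ S → Forced G S v
  | force {u w : V} : Forced G S u → G.Adj u w →
      (∀ x, G.Adj u x → x ≠ w → Forced G S x) → Forced G S w

/-- `S` is a zero forcing set of `G`. -/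
def IsZFS (G : SimpleGraph V) (S : Set V) : Prop := ∀ v, Forced G S v

/-- `S` is a minimal zero forcing set of `G`. -/
def IsMinimalZFS (G : SimpleGraph V) (S : Set V) : Prop :=
  IsZFS G S ∧ ∀ S' ⊂ S, ¬ IsZFS G S'

/-- The zero forcing number of `G`. -/
noncomputable def zfNum (G : SimpleGraph V) : ℕ :=
  sInf {n | ∃ S : Set V, IsZFS G S ∧ S.ncard = n}

/-- A graph is well-forced if every minimal zero forcing set is minimum. -/
def WellForced (G : SimpleGraph V) : Prop :=
  ∀ S, IsMinimalZFS G S → S.ncard = zfNum G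

/-- Degree of a vertex (as the `ncard` of its neighbor set). -/
noncomputable def deg (G : SimpleGraph V) (v : V) : ℕ := (G.neighborSet v).ncard

end ZF

open ZF SimpleGraph

/-- The corona `G ∘ K₁`: attach a new pendent vertex (`Sum.inr v`) to each vertex
`Sum.inl v` of `G`. -/
def corona {V : Type*} (G : SimpleGraph V) : SimpleGraph (V ⊕ V) :=
  SimpleGraph.fromRel fun a b =>
    match a, b with
    | .inl u, .inl w => G.Adj u w
    | .inl u, .inr w => u = w
    | _, _ => False

section Aux
variable {V : Type*} {G : SimpleGraph V}

lemma forced_mono {S T : Set V} {H : SimpleGraph V} (h : S ⊆ T) {v : V}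
    (hv : Forced H S v) : Forced H T v := by
  induction hv with
  | init h' => exact .init (h h')
  | force hu hadj hall ihu ihall => exact .force ihu hadj ihall

@[simp] lemma corona_adj_ll {u w : V} : (corona G).Adj (.inl u) (.inl w) ↔ G.Adj u w := by
  simp [corona, fromRel_adj]
  constructor
  · rintro ⟨-, h | h⟩
    · exact h
    · exact h.symm
  · intro h
    exact ⟨fun he => (he ▸ h).ne rfl, Or.inl h⟩

@[simp] lemma corona_adj_lr {u w : V} : (corona G).Adj (.inl u) (.inr w) ↔ u = w := by
  simp [corona, fromRel_adj]

@[simp] lemma corona_adj_rl {u w : V} : (corona G).Adj (.inr u) (.inl w) ↔ w = u := by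
  simp [corona, fromRel_adj, eq_comm]

@[simp] lemma corona_adj_rr {u w : V} : ¬ (corona G).Adj (.inr u) (.inr w) := by
  simp [corona, fromRel_adj]

/-- All pendants except the one at `v0` form a ZFS, provided `v0` has a neighbor. -/
lemma small_zfs {v0 u0 : V} (h : G.Adj u0 v0) :
    IsZFS (corona G) (Sum.inr '' {v | v ≠ v0}) := by
  set S : Set (V ⊕ V) := Sum.inr '' {v | v ≠ v0} with hS
  have h1 : ∀ u : V, u ≠ v0 → Forced (corona G) S (.inr u) :=
    fun u hu => .init ⟨u, hu, rfl⟩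
  have h2 : ∀ u : V, u ≠ v0 → Forced (corona G) S (.inl u) := by
    intro u hu
    refine .force (h1 u hu) (by simp) ?_
    rintro (w | w) hw hne
    · exact absurd (congrArg Sum.inl (corona_adj_rl.mp hw)) hne
    · exact absurd hw corona_adj_rr
  have hu0 : u0 ≠ v0 := h.ne
  have h3 : Forced (corona G) S (.inl v0) := by
    refine .force (h2 u0 hu0) (corona_adj_ll.mpr h) ?_
    rintro (w | w) hw hne
    · exact h2 w (fun he => hne (congrArg Sum.inl he))
    · exact h1 w ((corona_adj_lr.mp hw) ▸ hu0)
  have h4 : Forced (corona G) S (.inr v0) := by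
    refine .force h3 (by simp) ?_
    rintro (w | w) hw hne
    · exact h2 w (corona_adj_ll.mp hw).ne'
    · exact absurd (congrArg Sum.inr (corona_adj_lr.mp hw).symm) hne
  rintro (u | u)
  · by_cases hu : u = v0
    · exact hu ▸ h3
    · exact h2 u hu
  · by_cases hu : u = v0
    · exact hu ▸ h4
    · exact h1 u hu

/-- The range of `inl` is a ZFS. -/
lemma big_zfs : IsZFS (corona G) (Set.range Sum.inl) := by
  have b1 : ∀ v : V, Forced (corona G) (Set.range Sum.inl) (.inl v) :=
    fun v => .init ⟨v, rfl⟩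
  rintro (v | v)
  · exact b1 v
  · refine .force (b1 v) (by simp) ?_
    rintro (w | w) hw hne
    · exact b1 w
    · exact absurd (congrArg Sum.inr (corona_adj_lr.mp hw).symm) hne

/-- Removing one vertex from the inl-side: not a ZFS. -/
lemma big_minus_not_zfs (v0 : V) :
    ¬ IsZFS (corona G) (Sum.inl '' {v | v ≠ v0}) := by
  intro hzfs
  set T : Set (V ⊕ V) := Sum.inl '' {v | v ≠ v0} with hT
  set B : Set (V ⊕ V) := {x | match x with
    | .inl u => u ≠ v0
    | .inr u => u ≠ v0 ∧ ¬ G.Adj u v0} with hB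
  have key : ∀ x, Forced (corona G) T x → x ∈ B := by
    intro x hx
    induction hx with
    | init h' =>
      obtain ⟨u, hu, rfl⟩ := h'
      exact hu
    | @force u w hu hadj hall ihu ihall =>
      match u, w with
      | .inr a, w =>
        obtain ⟨ha, hav⟩ := ihu
        match w with
        | .inl b => exact (corona_adj_rl.mp hadj) ▸ ha
        | .inr b => exact absurd hadj corona_adj_rr
      | .inl a, .inl b =>
        intro hb
        subst hb
        have := ihall (.inr a) (by simp) (by simp)
        exact this.2 (corona_adj_ll.mp hadj)
      | .inl a, .inr b =>
        have hb : a = b := corona_adj_lr.mp hadj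
        subst hb
        refine ⟨ihu, fun hav => ?_⟩
        have := ihall (.inl v0) (corona_adj_ll.mpr hav) (by simp)
        exact this rfl
  exact (key _ (hzfs (.inl v0))) rfl

end Aux

/-- For any connected graph `G` with at least two vertices, the corona
`G ∘ K₁` is not well-forced. -/
theorem corona_not_wellforced {V : Type*} [Fintype V] (G : SimpleGraph V)
    (hG : G.Connected) (h2 : 2 ≤ Fintype.card V) :
    ¬ WellForced (corona G) := by
  intro hwf
  -- find an edge
  have hne : Nonempty V := Fintype.card_pos_iff.mp (by omega)
  obtain ⟨v0⟩ := hne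
  obtain ⟨w, hw⟩ := Fintype.exists_ne_of_one_lt_card (by omega) v0
  obtain ⟨p⟩ := hG.preconnected v0 w
  have hadj : ∃ u0, G.Adj u0 v0 := by
    cases p with
    | nil => exact absurd rfl hw.symm
    | cons h q => exact ⟨_, h.symm⟩
  obtain ⟨u0, hu0⟩ := hadj
  -- big minimal ZFS
  have hmin : IsMinimalZFS (corona G) (Set.range Sum.inl) := by
    refine ⟨big_zfs, ?_⟩
    intro S' hS' hzfs
    obtain ⟨x, hx, hxn⟩ := Set.exists_of_ssubset hS'
    obtain ⟨a, rfl⟩ := hx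
    have hsub : S' ⊆ Sum.inl '' {v | v ≠ a} := by
      intro y hy
      obtain ⟨b, rfl⟩ := hS'.subset hy
      exact ⟨b, fun hb => hxn (hb ▸ hy), rfl⟩
    exact big_minus_not_zfs a (fun v => forced_mono hsub (hzfs v))
  -- cardinalities
  have hcard_big : (Set.range (Sum.inl : V → V ⊕ V)).ncard = Fintype.card V := by
    rw [← Set.image_univ, Set.ncard_image_of_injective _ Sum.inl_injective,
      Set.ncard_univ, Nat.card_eq_fintype_card]
  have hsetid : {v : V | v ≠ v0} = Set.univ \ {v0} := by ext; simp
  have hcard_small : ((Sum.inr : V → V ⊕ V) '' {v : V | v ≠ v0}).ncard = Fintype.card V - 1 := by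
    rw [Set.ncard_image_of_injective _ Sum.inr_injective, hsetid,
      Set.ncard_diff (by simp), Set.ncard_univ, Nat.card_eq_fintype_card,
      Set.ncard_singleton]
  have hzf_le : zfNum (corona G) ≤ Fintype.card V - 1 :=
    Nat.sInf_le ⟨_, small_zfs hu0, hcard_small⟩
  have := hwf _ hmin
  rw [hcard_big] at this
  omega
end

section
/- Let G be a generalized star with center vertex of degree k ≥ 2. Then G is well-forced if and only if G has at least two legs of length one and every leg has length at most three. -/
open ZF SimpleGraph

/-- A structure witnessing that `G` is a generalized star with center `c` and `ℓ` legs: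
the vertex set consists of `c` together with `ℓ` disjoint legs, the `i`-th leg being a
path `leg i 0, leg i 1, …, leg i (len i - 1)` attached to `c` at `leg i 0`, and these
are the only adjacencies in `G`.  The length of the `i`-th leg (its number of edges,
counted from `c` to the leaf) is `len i`. -/
structure GenStar {V : Type*} (G : SimpleGraph V) (c : V) (ℓ : ℕ) where
  len : Fin ℓ → ℕ
  len_pos : ∀ i, 1 ≤ len i
  leg : Fin ℓ → ℕ → V
  ne_center : ∀ i j, j < len i → leg i j ≠ c
  inj : ∀ i j i' j', j < len i → j' < len i' → leg i j = leg i' j' → i = i' ∧ j = j'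
  cover : ∀ v, v = c ∨ ∃ i j, j < len i ∧ leg i j = v
  adj_iff : ∀ a b, G.Adj a b ↔
    ((a = c ∧ ∃ i, b = leg i 0) ∨ (b = c ∧ ∃ i, a = leg i 0) ∨
      (∃ i j, j + 1 < len i ∧
        ((a = leg i j ∧ b = leg i (j + 1)) ∨ (b = leg i j ∧ a = leg i (j + 1)))))


namespace ZF
variable {V : Type*} {G : SimpleGraph V} {S T B : Set V} {v : V}

lemma Forced.mono (h : S ⊆ T) : Forced G S v → Forced G T v := by
  intro hv
  induction hv with
  | init h' => exact .init (h h')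
  | force _ hadj _ ih ihx => exact .force ih hadj ihx

lemma forced_closed
    (hB : ∀ v ∈ B, ∀ w, G.Adj v w → (∀ x, G.Adj v x → x ≠ w → x ∈ B) → w ∈ B)
    (hS : S ⊆ B) : Forced G S v → v ∈ B := by
  intro hv
  induction hv with
  | init h' => exact hS h'
  | force _ hadj _ ih ihx => exact hB _ ih _ hadj ihx

lemma forced_trans (h : ∀ s ∈ S, Forced G T s) : Forced G S v → Forced G T v := by
  intro hv
  induction hv with
  | init h' => exact h _ h'
  | force _ hadj _ ih ihx => exact .force ih hadj ihx

lemma isZFS_mono (h : S ⊆ T) (hS : IsZFS G S) : IsZFS G T :=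
  fun v => (hS v).mono h

lemma isZFS_removable {s : V} (hS : IsZFS G S) (hs : Forced G (S \ {s}) s) :
    IsZFS G (S \ {s}) := by
  intro v
  refine forced_trans (fun t ht => ?_) (hS v)
  by_cases h : t = s
  · exact h ▸ hs
  · exact .init ⟨ht, h⟩

lemma isMinimalZFS_of (hS : IsZFS G S) (h : ∀ s ∈ S, ¬ IsZFS G (S \ {s})) :
    IsMinimalZFS G S := by
  refine ⟨hS, fun S' hss hS' => ?_⟩
  obtain ⟨t, htS, htS'⟩ := Set.exists_of_ssubset hss
  have hsub := hss.subset
  exact h t htS (isZFS_mono (fun x hx => ⟨hsub hx, fun he => htS' (he ▸ hx)⟩) hS')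

end ZF

namespace GenStar
variable {V : Type*} {G : SimpleGraph V} {u : V} {k : ℕ} (hG : GenStar G u k)
  {S T : Set V}

lemma zero_lt_len (i : Fin k) : 0 < hG.len i := hG.len_pos i

lemma adj_u_leg0 (i : Fin k) : G.Adj u (hG.leg i 0) :=
  (hG.adj_iff _ _).2 (Or.inl ⟨rfl, i, rfl⟩)

lemma adj_chain {i : Fin k} {m : ℕ} (h : m + 1 < hG.len i) :
    G.Adj (hG.leg i m) (hG.leg i (m + 1)) :=
  (hG.adj_iff _ _).2 (Or.inr (Or.inr ⟨i, m, h, Or.inl ⟨rfl, rfl⟩⟩))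

lemma adj_u_cases {b : V} (hadj : G.Adj u b) : ∃ i, b = hG.leg i 0 := by
  rcases (hG.adj_iff _ _).1 hadj with ⟨_, i, hb⟩ | ⟨_, i, ha⟩ | ⟨i, j, hj, h⟩
  · exact ⟨i, hb⟩
  · exact absurd ha.symm (hG.ne_center i 0 (hG.zero_lt_len i))
  · rcases h with ⟨ha, _⟩ | ⟨_, ha⟩
    · exact absurd ha.symm (hG.ne_center i j (by omega))
    · exact absurd ha.symm (hG.ne_center i (j+1) hj)

lemma adj_cases {i : Fin k} {m : ℕ} (hm : m < hG.len i) {b : V}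
    (hadj : G.Adj (hG.leg i m) b) :
    (m = 0 ∧ b = u) ∨ (∃ m', m = m' + 1 ∧ b = hG.leg i m') ∨
      (m + 1 < hG.len i ∧ b = hG.leg i (m + 1)) := by
  rcases (hG.adj_iff _ _).1 hadj with ⟨ha, _, _⟩ | ⟨hb, i', ha⟩ | ⟨i', j, hj, h⟩
  · exact absurd ha (hG.ne_center i m hm)
  · obtain ⟨_, hm0⟩ := hG.inj i m i' 0 hm (hG.zero_lt_len i') ha
    exact Or.inl ⟨hm0, hb⟩
  · rcases h with ⟨ha, hb⟩ | ⟨hb, ha⟩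
    · obtain ⟨hi, hmj⟩ := hG.inj i m i' j hm (by omega) ha
      subst hi; subst hmj
      exact Or.inr (Or.inr ⟨hj, hb⟩)
    · obtain ⟨hi, hmj⟩ := hG.inj i m i' (j+1) hm hj ha
      subst hi
      exact Or.inr (Or.inl ⟨j, hmj, hb⟩)

lemma leg_ne {i i' : Fin k} {m m' : ℕ} (hm : m < hG.len i) (hm' : m' < hG.len i')
    (h : i ≠ i' ∨ m ≠ m') : hG.leg i m ≠ hG.leg i' m' := by
  intro he
  obtain ⟨h1, h2⟩ := hG.inj i m i' m' hm hm' he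
  rcases h with h | h
  · exact h h1
  · exact h h2

lemma forced_desc {i : Fin k} :
    ∀ j, j < hG.len i → Forced G S (hG.leg i j) →
      (j + 1 < hG.len i → Forced G S (hG.leg i (j+1))) →
      ∀ m, m ≤ j → Forced G S (hG.leg i m) := by
  intro j
  induction j with
  | zero =>
    intro _ hF _ m hm
    have : m = 0 := by omega
    exact this ▸ hF
  | succ j ih =>
    intro hj hF hup m hm
    have h0 : Forced G S (hG.leg i j) := by
      refine .force hF (hG.adj_chain hj).symm ?_
      intro x hx hne
      rcases hG.adj_cases hj hx with ⟨h01, _⟩ | ⟨m', hm', rfl⟩ | ⟨hlt, rfl⟩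
      · omega
      · have : m' = j := by omega
        subst this
        exact absurd rfl hne
      · exact hup hlt
    rcases Nat.lt_or_ge m (j+1) with h | h
    · exact ih (by omega) h0 (fun _ => hF) m (by omega)
    · have : m = j + 1 := by omega
      exact this ▸ hF

lemma forced_c {i : Fin k} (h0 : Forced G S (hG.leg i 0))
    (h1 : 1 < hG.len i → Forced G S (hG.leg i 1)) : Forced G S u := by
  refine .force h0 (hG.adj_u_leg0 i).symm ?_
  intro x hx hne
  rcases hG.adj_cases (hG.zero_lt_len i) hx with ⟨_, rfl⟩ | ⟨m', hm', _⟩ | ⟨hlt, rfl⟩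
  · exact absurd rfl hne
  · omega
  · exact h1 hlt

lemma forced_asc {i : Fin k} (hc : Forced G S u) (j : ℕ)
    (hbase : ∀ m ≤ j, m < hG.len i → Forced G S (hG.leg i m)) :
    ∀ m, m < hG.len i → Forced G S (hG.leg i m) := by
  intro m
  induction m using Nat.strong_induction_on with
  | _ m IH =>
    intro hm
    rcases le_or_gt m j with h | h
    · exact hbase m h hm
    · obtain ⟨t, rfl⟩ : ∃ t, m = t + 1 := ⟨m - 1, by omega⟩
      have hFt : Forced G S (hG.leg i t) := IH t (by omega) (by omega)
      refine .force hFt (hG.adj_chain hm) ?_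
      intro x hx hne
      rcases hG.adj_cases (show t < hG.len i by omega) hx with
        ⟨ht0, rfl⟩ | ⟨t', ht', rfl⟩ | ⟨hlt, rfl⟩
      · exact hc
      · exact IH t' (by omega) (by omega)
      · exact absurd rfl hne

lemma forced_leaf {i : Fin k} (hF : Forced G S (hG.leg i (hG.len i - 1))) :
    (∀ m, m < hG.len i → Forced G S (hG.leg i m)) ∧ Forced G S u := by
  have hpos := hG.zero_lt_len i
  have hall : ∀ m ≤ hG.len i - 1, Forced G S (hG.leg i m) :=
    hG.forced_desc (hG.len i - 1) (by omega) hF (fun h => by omega)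
  have h2 : ∀ m, m < hG.len i → Forced G S (hG.leg i m) := fun m hm => hall m (by omega)
  exact ⟨h2, hG.forced_c (h2 0 hpos) (fun h => h2 1 h)⟩

lemma forced_c_to_leg0 {i : Fin k} (hc : Forced G S u)
    (hall : ∀ i', i' ≠ i → Forced G S (hG.leg i' 0)) : Forced G S (hG.leg i 0) := by
  refine .force hc (hG.adj_u_leg0 i) ?_
  intro x hx hne
  obtain ⟨i', rfl⟩ := hG.adj_u_cases hx
  refine hall i' (fun h => hne ?_)
  subst h; rfl

lemma isZFS_of (hc : Forced G S u)
    (hlegs : ∀ (i : Fin k) m, m < hG.len i → Forced G S (hG.leg i m)) : IsZFS G S := by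
  intro v
  rcases hG.cover v with rfl | ⟨i, m, hm, rfl⟩
  · exact hc
  · exact hlegs i m hm

/-- A leg is a "pocket" for `T` if `T` meets it in at most one vertex, which must be
interior (not the attachment vertex, not the leaf). -/
def Pocket (T : Set V) (i : Fin k) : Prop :=
  ∃ P : ℕ → Prop, (∀ m, m < hG.len i → hG.leg i m ∈ T → P m) ∧
    (∀ m, P m → 1 ≤ m ∧ m + 1 < hG.len i) ∧ (∀ m m', P m → P m' → m = m')

lemma pocket_empty {i : Fin k} (h : ∀ m, m < hG.len i → hG.leg i m ∉ T) :
    hG.Pocket T i :=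
  ⟨fun _ => False, fun m hm ht => absurd ht (h m hm), fun _ h => h.elim,
    fun _ _ h => h.elim⟩

lemma pocket_single {i : Fin k} (s : ℕ) (h1 : 1 ≤ s) (h2 : s + 1 < hG.len i)
    (h : ∀ m, m < hG.len i → hG.leg i m ∈ T → m = s) : hG.Pocket T i :=
  ⟨fun m => m = s, h, fun m hm => by omega, fun m m' hm hm' => by omega⟩

lemma block {i j : Fin k} (hij : i ≠ j) (hi : hG.Pocket T i) (hj : hG.Pocket T j) :
    ¬ IsZFS G T := by
  obtain ⟨P, hPT, hPint, hPuniq⟩ := hi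
  obtain ⟨Q, hQT, hQint, hQuniq⟩ := hj
  intro hZ
  set B : Set V := {v | (∀ m, m < hG.len i → v = hG.leg i m → P m) ∧
      (∀ m, m < hG.len j → v = hG.leg j m → Q m)} with hBdef
  have hTB : T ⊆ B := fun t ht =>
    ⟨fun m hm he => hPT m hm (he ▸ ht), fun m hm he => hQT m hm (he ▸ ht)⟩
  have hclosed : ∀ v ∈ B, ∀ w, G.Adj v w → (∀ x, G.Adj v x → x ≠ w → x ∈ B) → w ∈ B := by
    intro v hv w hadj hx
    constructor
    · intro m hm hwm
      exfalso
      subst hwm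
      rcases hG.adj_cases hm hadj.symm with ⟨hm0, rfl⟩ | ⟨m', hm', rfl⟩ | ⟨hlt, rfl⟩
      · -- v = u, m = 0
        subst hm0
        have hxB : hG.leg j 0 ∈ B := hx _ (hG.adj_u_leg0 j)
          (hG.leg_ne (hG.zero_lt_len j) (hG.zero_lt_len i) (Or.inl hij.symm))
        have hQ0 : Q 0 := hxB.2 0 (hG.zero_lt_len j) rfl
        exact absurd (hQint 0 hQ0).1 (by omega)
      · -- v = leg i m', m = m' + 1
        have hPm' : P m' := hv.1 m' (by omega) rfl
        obtain ⟨h1, h2⟩ := hPint m' hPm'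
        have hxB : hG.leg i (m' - 1) ∈ B := by
          refine hx _ ?_ ?_
          · have : (m' - 1) + 1 = m' := by omega
            exact this ▸ (hG.adj_chain (show (m'-1)+1 < hG.len i by omega)).symm
          · exact hG.leg_ne (by omega) hm (Or.inr (by omega))
        have : P (m' - 1) := hxB.1 (m' - 1) (by omega) rfl
        have := hPuniq _ _ this hPm'
        omega
      · -- v = leg i (m+1)
        have hPm1 : P (m + 1) := hv.1 (m+1) hlt rfl
        obtain ⟨h1, h2⟩ := hPint (m+1) hPm1
        have hxB : hG.leg i (m + 2) ∈ B := by
          refine hx _ (hG.adj_chain (show (m+1)+1 < hG.len i by omega)) ?_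
          exact hG.leg_ne (by omega) hm (Or.inr (by omega))
        have : P (m + 2) := hxB.1 (m + 2) (by omega) rfl
        have := hPuniq _ _ this hPm1
        omega
    · intro m hm hwm
      exfalso
      subst hwm
      rcases hG.adj_cases hm hadj.symm with ⟨hm0, rfl⟩ | ⟨m', hm', rfl⟩ | ⟨hlt, rfl⟩
      · subst hm0
        have hxB : hG.leg i 0 ∈ B := hx _ (hG.adj_u_leg0 i)
          (hG.leg_ne (hG.zero_lt_len i) (hG.zero_lt_len j) (Or.inl hij))
        have hP0 : P 0 := hxB.1 0 (hG.zero_lt_len i) rfl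
        exact absurd (hPint 0 hP0).1 (by omega)
      · have hQm' : Q m' := hv.2 m' (by omega) rfl
        obtain ⟨h1, h2⟩ := hQint m' hQm'
        have hxB : hG.leg j (m' - 1) ∈ B := by
          refine hx _ ?_ ?_
          · have : (m' - 1) + 1 = m' := by omega
            exact this ▸ (hG.adj_chain (show (m'-1)+1 < hG.len j by omega)).symm
          · exact hG.leg_ne (by omega) hm (Or.inr (by omega))
        have : Q (m' - 1) := hxB.2 (m' - 1) (by omega) rfl
        have := hQuniq _ _ this hQm'
        omega
      · have hQm1 : Q (m + 1) := hv.2 (m+1) hlt rfl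
        obtain ⟨h1, h2⟩ := hQint (m+1) hQm1
        have hxB : hG.leg j (m + 2) ∈ B := by
          refine hx _ (hG.adj_chain (show (m+1)+1 < hG.len j by omega)) ?_
          exact hG.leg_ne (by omega) hm (Or.inr (by omega))
        have : Q (m + 2) := hxB.2 (m + 2) (by omega) rfl
        have := hQuniq _ _ this hQm1
        omega
  have hB0 : hG.leg i 0 ∈ B := forced_closed hclosed hTB (hZ (hG.leg i 0))
  have hP0 : P 0 := hB0.1 0 (hG.zero_lt_len i) rfl
  exact absurd (hPint 0 hP0).1 (by omega)

lemma block2 (hT : ∀ t ∈ T, ∃ i, t = hG.leg i 0 ∧ 2 ≤ hG.len i) : ¬ IsZFS G T := by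
  intro hZ
  set B : Set V := {v | ∃ i, v = hG.leg i 0 ∧ 2 ≤ hG.len i} with hBdef
  have hTB : T ⊆ B := hT
  have hclosed : ∀ v ∈ B, ∀ w, G.Adj v w → (∀ x, G.Adj v x → x ≠ w → x ∈ B) → w ∈ B := by
    rintro v ⟨i, rfl, h2⟩ w hadj hx
    rcases hG.adj_cases (hG.zero_lt_len i) hadj with ⟨_, rfl⟩ | ⟨m', hm', _⟩ | ⟨hlt, rfl⟩
    · -- w = u
      exfalso
      have hxB : hG.leg i 1 ∈ B := hx _ (hG.adj_chain (by omega)) (hG.ne_center i 1 (by omega))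
      obtain ⟨i', he, _⟩ := hxB
      obtain ⟨_, h10⟩ := hG.inj i 1 i' 0 (by omega) (hG.zero_lt_len i') he
      omega
    · omega
    · -- w = leg i 1
      exfalso
      have hxB : u ∈ B := hx u (hG.adj_u_leg0 i).symm
        (Ne.symm (hG.ne_center i 1 hlt))
      obtain ⟨i', he, _⟩ := hxB
      exact hG.ne_center i' 0 (hG.zero_lt_len i') he.symm
  have : u ∈ B := forced_closed hclosed hTB (hZ u)
  obtain ⟨i', he, _⟩ := this
  exact hG.ne_center i' 0 (hG.zero_lt_len i') he.symm

lemma ncard_ne_fin (r : Fin k) : ({i : Fin k | i ≠ r}).ncard = k - 1 := by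
  have h := Set.ncard_add_ncard_compl ({r} : Set (Fin k))
  have he : ({r} : Set (Fin k))ᶜ = {i | i ≠ r} := by ext x; simp
  rw [he, Set.ncard_singleton, Nat.card_eq_fintype_card, Fintype.card_fin] at h
  omega

lemma ncard_ne_fin2 {r r' : Fin k} (hrr : r ≠ r') :
    ({i : Fin k | i ≠ r ∧ i ≠ r'}).ncard = k - 2 := by
  have h := Set.ncard_add_ncard_compl ({r, r'} : Set (Fin k))
  have he : ({r, r'} : Set (Fin k))ᶜ = {i | i ≠ r ∧ i ≠ r'} := by ext x; simp [not_or]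
  rw [he, Set.ncard_pair hrr, Nat.card_eq_fintype_card, Fintype.card_fin] at h
  omega

variable [Fintype V]

include hG

lemma zfs_lower (hk : 2 ≤ k) (hZ : IsZFS G S) : k - 1 ≤ S.ncard := by
  classical
  set hit : Set (Fin k) := {i | ∃ m, m < hG.len i ∧ hG.leg i m ∈ S} with hhit
  have hunhit : ∀ i j : Fin k, i ∉ hit → j ∉ hit → i = j := by
    intro i j hi hj
    by_contra hij
    refine hG.block hij (hG.pocket_empty ?_) (hG.pocket_empty ?_) hZ
    · intro m hm hmem; exact hi ⟨m, hm, hmem⟩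
    · intro m hm hmem; exact hj ⟨m, hm, hmem⟩
  have hcompl : (hitᶜ).ncard ≤ 1 := by
    rw [Set.ncard_le_one_iff]
    intro a b ha hb
    exact hunhit a b ha hb
  have hcard := Set.ncard_add_ncard_compl hit
  rw [Nat.card_eq_fintype_card, Fintype.card_fin] at hcard
  have hhitcard : k - 1 ≤ hit.ncard := by omega
  set f : Fin k → V := fun i =>
    if h : ∃ m, m < hG.len i ∧ hG.leg i m ∈ S then hG.leg i h.choose else u with hf
  have hfi : ∀ i, ∀ hi : i ∈ hit, f i = hG.leg i (Exists.choose hi) := by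
    intro i hi
    simp only [hf]
    exact dif_pos hi
  have hmem : ∀ i ∈ hit, f i ∈ S := by
    intro i hi
    rw [hfi i hi]
    exact hi.choose_spec.2
  have hinj : Set.InjOn f hit := by
    intro i hi i' hi' he
    rw [hfi i hi, hfi i' hi'] at he
    exact (hG.inj _ _ _ _ hi.choose_spec.1 hi'.choose_spec.1 he).1
  have := Set.ncard_le_ncard_of_injOn f hmem hinj (Set.toFinite S)
  omega

lemma isZFS_std (r : Fin k) (hk : 2 ≤ k) :
    IsZFS G ((fun i => hG.leg i (hG.len i - 1)) '' {i | i ≠ r}) := by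
  set S := (fun i => hG.leg i (hG.len i - 1)) '' {i : Fin k | i ≠ r} with hS
  have hleaf : ∀ i : Fin k, i ≠ r → Forced G S (hG.leg i (hG.len i - 1)) :=
    fun i hi => .init ⟨i, hi, rfl⟩
  have hlegs : ∀ i : Fin k, i ≠ r → ∀ m, m < hG.len i → Forced G S (hG.leg i m) :=
    fun i hi => (hG.forced_leaf (hleaf i hi)).1
  obtain ⟨i₁, hi₁⟩ : ∃ i₁ : Fin k, i₁ ≠ r := by
    by_cases h : r = ⟨0, by omega⟩
    · refine ⟨⟨1, by omega⟩, ?_⟩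
      subst h
      intro he
      have := congrArg Fin.val he
      simp at this
    · exact ⟨⟨0, by omega⟩, fun he => h he.symm⟩
  have hc : Forced G S u := (hG.forced_leaf (hleaf i₁ hi₁)).2
  have hr0 : Forced G S (hG.leg r 0) :=
    hG.forced_c_to_leg0 hc (fun i' hi' => hlegs i' hi' 0 (hG.zero_lt_len i'))
  have hrall : ∀ m, m < hG.len r → Forced G S (hG.leg r m) :=
    hG.forced_asc hc 0 (fun m hm _ => by
      have : m = 0 := by omega
      exact this ▸ hr0)
  refine hG.isZFS_of hc (fun i m hm => ?_)
  by_cases hi : i = r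
  · exact hi ▸ hrall m (hi ▸ hm)
  · exact hlegs i hi m hm

lemma zfnum_eq (hk : 2 ≤ k) : zfNum G = k - 1 := by
  classical
  have r : Fin k := ⟨0, by omega⟩
  have hmem : k - 1 ∈ {n | ∃ S : Set V, IsZFS G S ∧ S.ncard = n} := by
    refine ⟨(fun i => hG.leg i (hG.len i - 1)) '' {i | i ≠ r}, hG.isZFS_std r hk, ?_⟩
    rw [Set.ncard_image_of_injOn, ncard_ne_fin r]
    intro i hi i' hi' he
    exact (hG.inj _ _ _ _ (by have := hG.zero_lt_len i; omega)
      (by have := hG.zero_lt_len i'; omega) he).1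
  refine le_antisymm (Nat.sInf_le hmem) (le_csInf ⟨_, hmem⟩ ?_)
  rintro n ⟨S, hS, rfl⟩
  exact hG.zfs_lower hk hS

lemma not_wellforced_one (hk : 2 ≤ k) (r : Fin k) (hr : ∀ j, j ≠ r → 2 ≤ hG.len j) :
    ¬ WellForced G := by
  classical
  set S : Set V := insert u ((fun j => hG.leg j 0) '' {j | j ≠ r}) with hSdef
  have hc : Forced G S u := .init (Set.mem_insert _ _)
  have hleg0 : ∀ j : Fin k, j ≠ r → Forced G S (hG.leg j 0) :=
    fun j hj => .init (Set.mem_insert_of_mem _ ⟨j, hj, rfl⟩)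
  have hlegs : ∀ j : Fin k, j ≠ r → ∀ m, m < hG.len j → Forced G S (hG.leg j m) := by
    intro j hj
    refine hG.forced_asc hc 0 ?_
    intro m hm _
    have : m = 0 := by omega
    exact this ▸ hleg0 j hj
  have hr0 : Forced G S (hG.leg r 0) :=
    hG.forced_c_to_leg0 hc (fun j hj => hleg0 j hj)
  have hrall : ∀ m, m < hG.len r → Forced G S (hG.leg r m) := by
    refine hG.forced_asc hc 0 ?_
    intro m hm _
    have : m = 0 := by omega
    exact this ▸ hr0
  have hZ : IsZFS G S := by
    refine hG.isZFS_of hc (fun i m hm => ?_)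
    by_cases hi : i = r
    · exact hi ▸ hrall m (hi ▸ hm)
    · exact hlegs i hi m hm
  have hmin : IsMinimalZFS G S := by
    refine isMinimalZFS_of hZ ?_
    intro s hs
    rcases hs with rfl | ⟨j, hj, rfl⟩
    · -- removing the center
      refine hG.block2 ?_
      rintro t ⟨ht, htne⟩
      rcases ht with rfl | ⟨j, hj, rfl⟩
      · exact absurd rfl htne
      · exact ⟨j, rfl, hr j hj⟩
    · -- removing leg j's first vertex
      refine hG.block (i := j) (j := r) hj ?_ ?_
      · refine hG.pocket_empty ?_
        rintro m hm ⟨ht, htne⟩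
        rcases ht with he | ⟨j', hj', he⟩
        · exact hG.ne_center j m hm he
        · obtain ⟨h1, h2⟩ := hG.inj j m j' 0 hm (hG.zero_lt_len j') he.symm
          subst h1; subst h2
          exact htne rfl
      · refine hG.pocket_empty ?_
        rintro m hm ⟨ht, htne⟩
        rcases ht with he | ⟨j', hj', he⟩
        · exact hG.ne_center r m hm he
        · obtain ⟨h1, h2⟩ := hG.inj r m j' 0 hm (hG.zero_lt_len j') he.symm
          exact hj' h1.symm
  have hcard : S.ncard = k := by
    have hnotmem : u ∉ (fun j => hG.leg j 0) '' {j : Fin k | j ≠ r} := by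
      rintro ⟨j, hj, he⟩
      exact hG.ne_center j 0 (hG.zero_lt_len j) he
    rw [hSdef, Set.ncard_insert_of_notMem hnotmem (Set.toFinite _),
      Set.ncard_image_of_injOn, ncard_ne_fin r]
    · omega
    · intro a ha b hb he
      exact (hG.inj a 0 b 0 (hG.zero_lt_len a) (hG.zero_lt_len b) he).1
  intro hW
  have := hW S hmin
  rw [hcard, hG.zfnum_eq hk] at this
  omega

lemma not_wellforced_two (hk : 2 ≤ k) (p q i₀ : Fin k) (hpq : p ≠ q)
    (hp : hG.len p = 1) (hq : hG.len q = 1) (hlong : 4 ≤ hG.len i₀) :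
    ¬ WellForced G := by
  classical
  have hip : i₀ ≠ p := fun h => by rw [h, hp] at hlong; omega
  have hiq : i₀ ≠ q := fun h => by rw [h, hq] at hlong; omega
  set S : Set V := insert (hG.leg i₀ 1) (insert (hG.leg i₀ 2)
    ((fun j => hG.leg j (hG.len j - 1)) '' {j | j ≠ i₀ ∧ j ≠ q})) with hSdef
  have ha1 : Forced G S (hG.leg i₀ 1) := .init (Set.mem_insert _ _)
  have ha2 : Forced G S (hG.leg i₀ 2) :=
    .init (Set.mem_insert_of_mem _ (Set.mem_insert _ _))
  have hleaf : ∀ j : Fin k, j ≠ i₀ → j ≠ q → Forced G S (hG.leg j (hG.len j - 1)) :=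
    fun j h1 h2 => .init (Set.mem_insert_of_mem _ (Set.mem_insert_of_mem _ ⟨j, ⟨h1, h2⟩, rfl⟩))
  have hlegs : ∀ j : Fin k, j ≠ i₀ → j ≠ q → ∀ m, m < hG.len j → Forced G S (hG.leg j m) :=
    fun j h1 h2 => (hG.forced_leaf (hleaf j h1 h2)).1
  have hc : Forced G S u := (hG.forced_leaf (hleaf p hip.symm hpq)).2
  have ha0 : Forced G S (hG.leg i₀ 0) := by
    refine .force ha1 (hG.adj_chain (show 0 + 1 < hG.len i₀ by omega)).symm ?_
    intro x hx hne
    rcases hG.adj_cases (show 1 < hG.len i₀ by omega) hx with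
      ⟨h10, _⟩ | ⟨m', hm', rfl⟩ | ⟨hlt, rfl⟩
    · omega
    · have : m' = 0 := by omega
      subst this
      exact absurd rfl hne
    · exact ha2
  have hi₀all : ∀ m, m < hG.len i₀ → Forced G S (hG.leg i₀ m) := by
    refine hG.forced_asc hc 2 ?_
    intro m hm _
    interval_cases m
    · exact ha0
    · exact ha1
    · exact ha2
  have hq0 : Forced G S (hG.leg q 0) := by
    refine hG.forced_c_to_leg0 hc ?_
    intro j hj
    by_cases hji : j = i₀
    · exact hji ▸ ha0
    · exact hlegs j hji hj 0 (hG.zero_lt_len j)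
  have hZ : IsZFS G S := by
    refine hG.isZFS_of hc (fun i m hm => ?_)
    by_cases hi : i = i₀
    · exact hi ▸ hi₀all m (hi ▸ hm)
    · by_cases hiq' : i = q
      · subst hiq'
        have : m = 0 := by omega
        exact this ▸ hq0
      · exact hlegs i hi hiq' m hm
  -- helper: membership in S
  have hmemS : ∀ t ∈ S, t = hG.leg i₀ 1 ∨ t = hG.leg i₀ 2 ∨
      ∃ j : Fin k, j ≠ i₀ ∧ j ≠ q ∧ t = hG.leg j (hG.len j - 1) := by
    rintro t (rfl | rfl | ⟨j, ⟨h1, h2⟩, rfl⟩)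
    · exact Or.inl rfl
    · exact Or.inr (Or.inl rfl)
    · exact Or.inr (Or.inr ⟨j, h1, h2, rfl⟩)
  have hnotq : ∀ (T : Set V), T ⊆ S → (∀ m, m < hG.len q → hG.leg q m ∉ T) := by
    intro T hT m hm hmem
    rcases hmemS _ (hT hmem) with he | he | ⟨j, h1, h2, he⟩
    · exact hiq ((hG.inj q m i₀ 1 hm (by omega) he).1).symm
    · exact hiq ((hG.inj q m i₀ 2 hm (by omega) he).1).symm
    · exact h2 ((hG.inj q m j (hG.len j - 1) hm
        (by have := hG.zero_lt_len j; omega) he).1).symm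
  have hmin : IsMinimalZFS G S := by
    refine isMinimalZFS_of hZ ?_
    intro s hs
    rcases hmemS s hs with rfl | rfl | ⟨j, hj1, hj2, rfl⟩
    · -- removing leg i₀'s vertex 1 : pocket at 2
      refine hG.block hiq ?_ (hG.pocket_empty (hnotq _ Set.diff_subset)) |>.imp id
      refine hG.pocket_single 2 (by omega) (by omega) ?_
      rintro m hm ⟨ht, htne⟩
      rcases hmemS _ ht with he | he | ⟨j, h1, h2, he⟩
      · exact absurd (he ▸ rfl) htne
      · exact (hG.inj i₀ m i₀ 2 hm (by omega) he).2
      · exact absurd ((hG.inj i₀ m j (hG.len j - 1) hm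
          (by have := hG.zero_lt_len j; omega) he).1).symm h1
    · -- removing leg i₀'s vertex 2 : pocket at 1
      refine hG.block hiq ?_ (hG.pocket_empty (hnotq _ Set.diff_subset)) |>.imp id
      refine hG.pocket_single 1 (by omega) (by omega) ?_
      rintro m hm ⟨ht, htne⟩
      rcases hmemS _ ht with he | he | ⟨j, h1, h2, he⟩
      · exact (hG.inj i₀ m i₀ 1 hm (by omega) he).2
      · exact absurd (he ▸ rfl) htne
      · exact absurd ((hG.inj i₀ m j (hG.len j - 1) hm
          (by have := hG.zero_lt_len j; omega) he).1).symm h1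
    · -- removing a leaf of leg j (j ≠ i₀, q) : legs j, q empty
      refine hG.block hj2 ?_ (hG.pocket_empty (hnotq _ Set.diff_subset))
      refine hG.pocket_empty ?_
      rintro m hm ⟨ht, htne⟩
      rcases hmemS _ ht with he | he | ⟨j', h1, h2, he⟩
      · exact hj1 ((hG.inj j m i₀ 1 hm (by omega) he).1)
      · exact hj1 ((hG.inj j m i₀ 2 hm (by omega) he).1)
      · obtain ⟨hjj, hmm⟩ := hG.inj j m j' (hG.len j' - 1) hm
          (by have := hG.zero_lt_len j'; omega) he
        subst hjj
        subst hmm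
        exact htne rfl
  have hcard : S.ncard = k := by
    have hinjleaf : Set.InjOn (fun j => hG.leg j (hG.len j - 1))
        {j : Fin k | j ≠ i₀ ∧ j ≠ q} := by
      intro a _ b _ he
      exact (hG.inj a _ b _ (by have := hG.zero_lt_len a; omega)
        (by have := hG.zero_lt_len b; omega) he).1
    have h2img : hG.leg i₀ 2 ∉ (fun j => hG.leg j (hG.len j - 1)) ''
        {j : Fin k | j ≠ i₀ ∧ j ≠ q} := by
      rintro ⟨j, ⟨h1, _⟩, he⟩
      exact h1 (hG.inj j _ i₀ 2 (by have := hG.zero_lt_len j; omega) (by omega) he).1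
    have h1ins : hG.leg i₀ 1 ∉ insert (hG.leg i₀ 2)
        ((fun j => hG.leg j (hG.len j - 1)) '' {j : Fin k | j ≠ i₀ ∧ j ≠ q}) := by
      rintro (he | ⟨j, ⟨h1, _⟩, he⟩)
      · exact absurd (hG.inj i₀ 1 i₀ 2 (by omega) (by omega) he).2 (by omega)
      · exact h1 (hG.inj j _ i₀ 1 (by have := hG.zero_lt_len j; omega) (by omega) he).1
    rw [hSdef, Set.ncard_insert_of_notMem h1ins (Set.toFinite _),
      Set.ncard_insert_of_notMem h2img (Set.toFinite _),
      Set.ncard_image_of_injOn hinjleaf, ncard_ne_fin2 hiq]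
    omega
  intro hW
  have := hW S hmin
  rw [hcard, hG.zfnum_eq hk] at this
  omega

lemma not_wellforced_of_not_cond (hk : 2 ≤ k)
    (h : ¬ (2 ≤ ({i : Fin k | hG.len i = 1}).ncard ∧ ∀ i, hG.len i ≤ 3)) :
    ¬ WellForced G := by
  classical
  by_cases h1 : 2 ≤ ({i : Fin k | hG.len i = 1}).ncard
  · have h3 : ¬ ∀ i, hG.len i ≤ 3 := fun hh => h ⟨h1, hh⟩
    push_neg at h3
    obtain ⟨i₀, hi₀⟩ := h3
    obtain ⟨p, q, hpq, hp, hq⟩ : ∃ p q : Fin k, p ≠ q ∧ hG.len p = 1 ∧ hG.len q = 1 := by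
      rw [show (2 : ℕ) ≤ ({i : Fin k | hG.len i = 1}).ncard ↔
        1 < ({i : Fin k | hG.len i = 1}).ncard from Iff.rfl,
        Set.one_lt_ncard (Set.toFinite _)] at h1
      obtain ⟨a, ha, b, hb, hab⟩ := h1
      exact ⟨a, b, hab, ha, hb⟩
    exact hG.not_wellforced_two hk p q i₀ hpq hp hq (by omega)
  · push_neg at h1
    by_cases hex : ∃ p : Fin k, hG.len p = 1
    · refine hG.not_wellforced_one hk hex.choose ?_
      intro j hj
      by_contra hlen
      have hj1 : hG.len j = 1 := by have := hG.len_pos j; omega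
      have hsub : ({j, hex.choose} : Set (Fin k)) ⊆ {i | hG.len i = 1} := by
        rintro x (rfl | rfl)
        · exact hj1
        · exact hex.choose_spec
      have := Set.ncard_le_ncard hsub (Set.toFinite _)
      rw [Set.ncard_pair hj] at this
      omega
    · refine hG.not_wellforced_one hk ⟨0, by omega⟩ ?_
      intro j _
      by_contra hlen
      exact hex ⟨j, by have := hG.len_pos j; omega⟩

lemma minimal_ncard (hk : 2 ≤ k)
    (hcond1 : 2 ≤ ({i : Fin k | hG.len i = 1}).ncard) (hcond3 : ∀ i, hG.len i ≤ 3)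
    (hmin : IsMinimalZFS G S) : S.ncard = k - 1 := by
  classical
  have hZ : IsZFS G S := hmin.1
  have hrem : ∀ s ∈ S, ¬ Forced G (S \ {s}) s := by
    intro s hs hf
    exact hmin.2 (S \ {s}) (Set.sdiff_singleton_ssubset.mpr hs) (isZFS_removable hZ hf)
  obtain ⟨p, q, hpq, hp, hq⟩ : ∃ p q : Fin k, p ≠ q ∧ hG.len p = 1 ∧ hG.len q = 1 := by
    rw [show (2 : ℕ) ≤ ({i : Fin k | hG.len i = 1}).ncard ↔
      1 < ({i : Fin k | hG.len i = 1}).ncard from Iff.rfl,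
      Set.one_lt_ncard (Set.toFinite _)] at hcond1
    obtain ⟨x, hx, y, hy, hxy⟩ := hcond1
    exact ⟨x, y, hxy, hx, hy⟩
  set hitS : Fin k → Prop := fun i => ∃ m, m < hG.len i ∧ hG.leg i m ∈ S with hhitS
  have hfree : ∀ i j : Fin k, i ≠ j → hitS i ∨ hitS j := by
    intro i j hij
    by_contra hcon
    push_neg at hcon
    refine hG.block hij (hG.pocket_empty ?_) (hG.pocket_empty ?_) hZ
    · exact fun m hm hmem => hcon.1 ⟨m, hm, hmem⟩
    · exact fun m hm hmem => hcon.2 ⟨m, hm, hmem⟩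
  -- the center is not in S
  have hu : u ∉ S := by
    intro huS
    obtain ⟨c', hc'1, hc'S⟩ : ∃ c' : Fin k, hG.len c' = 1 ∧ hG.leg c' 0 ∈ S := by
      rcases hfree p q hpq with ⟨m, hm, hmS⟩ | ⟨m, hm, hmS⟩
      · rw [hp] at hm
        exact ⟨p, hp, Nat.lt_one_iff.mp hm ▸ hmS⟩
      · rw [hq] at hm
        exact ⟨q, hq, Nat.lt_one_iff.mp hm ▸ hmS⟩
    have hxT : hG.leg c' (hG.len c' - 1) ∈ S \ {u} := by
      rw [hc'1]
      exact ⟨hc'S, hG.ne_center c' 0 (hG.zero_lt_len c')⟩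
    exact hrem u huS (hG.forced_leaf (.init hxT)).2
  -- a length-one leg whose vertex is in S, plus another length-one leg
  obtain ⟨a, b, hab, ha1, hb1, haS⟩ :
      ∃ a b : Fin k, a ≠ b ∧ hG.len a = 1 ∧ hG.len b = 1 ∧ hG.leg a 0 ∈ S := by
    rcases hfree p q hpq with ⟨m, hm, hmS⟩ | ⟨m, hm, hmS⟩
    · rw [hp] at hm
      exact ⟨p, q, hpq, hp, hq, Nat.lt_one_iff.mp hm ▸ hmS⟩
    · rw [hq] at hm
      exact ⟨q, p, hpq.symm, hq, hp, Nat.lt_one_iff.mp hm ▸ hmS⟩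
  have hcu : ∀ (s : V), s ≠ hG.leg a 0 → Forced G (S \ {s}) u := by
    intro s hs
    have hxT : hG.leg a (hG.len a - 1) ∈ S \ {s} := by
      rw [ha1]
      exact ⟨haS, fun h => hs h.symm⟩
    exact (hG.forced_leaf (.init hxT)).2
  -- each leg contains at most one vertex of S
  have honce : ∀ (i : Fin k) (m m' : ℕ), m < hG.len i → m' < hG.len i →
      hG.leg i m ∈ S → hG.leg i m' ∈ S → m = m' := by
    have key : ∀ (i : Fin k) (m m' : ℕ), m < m' → m' < hG.len i →
        hG.leg i m ∈ S → hG.leg i m' ∈ S → False := by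
      intro i m m' hlt hm' hmS hm'S
      by_cases hleaf : m' = hG.len i - 1
      · -- the leaf forces everything below it
        have hleafT : hG.leg i (hG.len i - 1) ∈ S \ {hG.leg i m} := by
          rw [← hleaf]
          exact ⟨hm'S, hG.leg_ne hm' (by omega) (Or.inr (by omega))⟩
        exact hrem _ hmS ((hG.forced_leaf (.init hleafT)).1 m (by omega))
      · have h3 : hG.len i = 3 ∧ m = 0 ∧ m' = 1 := by
          have := hcond3 i
          have := hG.len_pos i
          omega
        obtain ⟨hlen3, rfl, rfl⟩ := h3
        have hia : i ≠ a := fun h => by rw [h, ha1] at hlen3; omega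
        have hcuT : Forced G (S \ {hG.leg i 1}) u :=
          hcu _ (hG.leg_ne (show 1 < hG.len i by omega)
            (show 0 < hG.len a by rw [ha1]; omega) (Or.inl hia))
        have h0T : hG.leg i 0 ∈ S \ {hG.leg i 1} :=
          ⟨hmS, hG.leg_ne (by omega) (by omega) (Or.inr (by omega))⟩
        refine hrem _ hm'S (.force (.init h0T) (hG.adj_chain (by omega)) ?_)
        intro x hx hne
        rcases hG.adj_cases (show 0 < hG.len i by omega) hx with
          ⟨_, rfl⟩ | ⟨t, ht, rfl⟩ | ⟨hlt2, rfl⟩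
        · exact hcuT
        · omega
        · exact absurd rfl hne
    intro i m m' hm hm' hmS hm'S
    rcases lt_trichotomy m m' with h | h | h
    · exact absurd (key i m m' h hm' hmS hm'S) not_false
    · exact h
    · exact absurd (key i m' m h hm hm'S hmS) not_false
  -- pocket positions
  set Ppos : Fin k → Prop := fun i => ∃ m, 1 ≤ m ∧ m + 1 < hG.len i ∧ hG.leg i m ∈ S
    with hPpos
  -- not all legs are hit
  have hnotall : ¬ ∀ i, hitS i := by
    intro hall
    have hbS : hG.leg b 0 ∈ S := by
      obtain ⟨m, hm, hmS⟩ := hall b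
      rw [hb1] at hm
      have : m = 0 := by omega
      exact this ▸ hmS
    have hpocket : ∀ i, Ppos i → hG.Pocket S i := by
      rintro i ⟨m, hm1, hm2, hmS⟩
      exact hG.pocket_single m hm1 hm2
        (fun m' hm' hm'S => honce i m' m hm' (by omega) hm'S hmS)
    have h2p : ∀ i j : Fin k, i ≠ j → Ppos i → Ppos j → False := by
      intro i j hij hi hj
      exact hG.block hij (hpocket i hi) (hpocket j hj) hZ
    by_cases hone : ∃ j, Ppos j
    · obtain ⟨j₀, m₀, hm₀1, hm₀2, hm₀S⟩ := hone
      have hj₀a : j₀ ≠ a := fun h => by rw [h, ha1] at hm₀2; omega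
      set s : V := hG.leg j₀ m₀ with hsdef
      set T : Set V := S \ {s} with hTdef
      have hcuT : Forced G T u :=
        hcu s (hG.leg_ne (show m₀ < hG.len j₀ by omega)
          (show 0 < hG.len a by rw [ha1]; omega) (Or.inl hj₀a))
      have hleg0 : ∀ j, j ≠ j₀ → Forced G T (hG.leg j 0) := by
        intro j hj
        obtain ⟨m, hm, hmS⟩ := hall j
        have hmT : hG.leg j m ∈ T := ⟨hmS, hG.leg_ne hm (by omega) (Or.inl hj)⟩
        by_cases hm0 : m = 0
        · exact .init (hm0 ▸ hmT)
        · by_cases hml : m = hG.len j - 1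
          · exact (hG.forced_leaf (.init (hml ▸ hmT))).1 0 (hG.zero_lt_len j)
          · exact absurd (h2p j j₀ hj ⟨m, by omega, by omega, hmS⟩
              ⟨m₀, hm₀1, hm₀2, hm₀S⟩) not_false
      have hj₀0 : Forced G T (hG.leg j₀ 0) := hG.forced_c_to_leg0 hcuT hleg0
      have hallj₀ : ∀ m, m < hG.len j₀ → Forced G T (hG.leg j₀ m) := by
        refine hG.forced_asc hcuT 0 ?_
        intro m hm _
        have : m = 0 := by omega
        exact this ▸ hj₀0
      exact hrem s hm₀S (hallj₀ m₀ (by omega))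
    · push_neg at hone
      set T : Set V := S \ {hG.leg b 0} with hTdef
      have hcuT : Forced G T u :=
        hcu _ (hG.leg_ne (show 0 < hG.len b by rw [hb1]; omega)
          (show 0 < hG.len a by rw [ha1]; omega) (Or.inl hab.symm))
      have hleg0 : ∀ j, j ≠ b → Forced G T (hG.leg j 0) := by
        intro j hj
        obtain ⟨m, hm, hmS⟩ := hall j
        have hmT : hG.leg j m ∈ T := ⟨hmS, hG.leg_ne hm (by rw [hb1]; omega) (Or.inl hj)⟩
        by_cases hm0 : m = 0
        · exact .init (hm0 ▸ hmT)
        · by_cases hml : m = hG.len j - 1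
          · exact (hG.forced_leaf (.init (hml ▸ hmT))).1 0 (hG.zero_lt_len j)
          · exact absurd (hone j ⟨m, by omega, by omega, hmS⟩) not_false
      exact hrem _ hbS (hG.forced_c_to_leg0 hcuT hleg0)
  -- counting
  push_neg at hnotall
  obtain ⟨j₀, hj₀⟩ := hnotall
  set f : V → Fin k := fun v =>
    if h : ∃ i m, m < hG.len i ∧ hG.leg i m = v then h.choose else j₀ with hfdef
  have hfspec : ∀ s ∈ S, ∃ m, m < hG.len (f s) ∧ hG.leg (f s) m = s := by
    intro s hs
    have hex : ∃ i m, m < hG.len i ∧ hG.leg i m = s := by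
      rcases hG.cover s with rfl | ⟨i, m, hm, he⟩
      · exact absurd hs hu
      · exact ⟨i, m, hm, he⟩
    have : f s = hex.choose := by
      simp only [hfdef]
      exact dif_pos hex
    rw [this]
    exact hex.choose_spec
  have hmaps : ∀ s ∈ S, f s ∈ {i : Fin k | i ≠ j₀} := by
    intro s hs
    obtain ⟨m, hm, he⟩ := hfspec s hs
    exact fun h => hj₀ ⟨m, h ▸ hm, by rw [← h, he]; exact hs⟩
  have hinj : Set.InjOn f S := by
    intro s hs s' hs' he
    obtain ⟨m, hm, hme⟩ := hfspec s hs
    obtain ⟨m', hm', hme'⟩ := hfspec s' hs'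
    rw [he] at hm hme
    have hmm : m = m' := honce (f s') m m' hm hm' (hme.symm ▸ hs) (hme'.symm ▸ hs')
    exact hme.symm.trans ((congrArg (hG.leg (f s')) hmm).trans hme')
  have hle := Set.ncard_le_ncard_of_injOn f hmaps hinj (Set.toFinite _)
  rw [ncard_ne_fin j₀] at hle
  have hge := hG.zfs_lower hk hZ
  omega

end GenStar

/-- Let `G` be a generalized star with center vertex `u` of degree
`k ≥ 2`.  Then `G` is well-forced if and only if `G` has at least two legs of length
one and every leg has length at most three. -/
theorem genstar_wellforced_iff {V : Type*} [Fintype V] (G : SimpleGraph V)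
    (u : V) (k : ℕ) (hk : 2 ≤ k) (hG : GenStar G u k) :
    WellForced G ↔
      (2 ≤ {i : Fin k | hG.len i = 1}.ncard ∧ ∀ i, hG.len i ≤ 3) := by
  constructor
  · intro hW
    by_contra hcon
    exact hG.not_wellforced_of_not_cond hk hcon hW
  · rintro ⟨h1, h3⟩ S hS
    rw [hG.zfnum_eq hk]
    exact hG.minimal_ncard hk h1 h3 hS
end
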